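/- Let (m_j)_{j=0}^{3} be measurable functions on C_4 × [0,1] such that the 4×4 matrix M(x,y) with entries M_{jk}(x,y) = m_j(Υ_k(x,y)) is unitary for μ_4×λ-a.e. (x,y). Then each operator S_j on L²(μ_4 × λ) defined by (S_j f)(x,y) = 2 m_j(x,y) f(R(x,y)), where R(x,y) = (4x mod 1, 2y mod 1), is an isometry. -/

import Mathlib

open MeasureTheory Set
open scoped ENNReal NNReal

/-- The four maps of the IFS on ℝ². -/
noncomputable def Ups : Fin 4 → ℝ × ℝ → ℝ × ℝ :=
  ![fun z => (z.1 / 4, z.2 / 2), fun z => ((z.1 + 2) / 4, z.2 / 2),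
    fun z => (z.1 / 4, (z.2 + 1) / 2), fun z => ((z.1 + 2) / 4, (z.2 + 1) / 2)]

/-- The common left inverse `R(x,y) = (4x mod 1, 2y mod 1)` of the maps `Ups j`. -/
noncomputable def Rmap : ℝ × ℝ → ℝ × ℝ :=
  fun z => (Int.fract (4 * z.1), Int.fract (2 * z.2))

/-!
`μ₄ × λ` is invariant for the system `(Υ_k)` with weights `1/4`, being the product of the
invariant measures of `x ↦ x/4, (x+2)/4` and `y ↦ y/2, (y+1)/2`. Applying this invariance to
`|S_j f|²` and using `R ∘ Υ_k = id` on `[0,1)²` (a set of full measure, as `μ₄ {1} = 0` by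
invariance) gives `‖S_j f‖² = ∑_k ∫ |m_j ∘ Υ_k|² |f|²`, and the rows of the unitary matrix `M`
have norm one.
-/

def IsIFSInvariant {α ι : Type*} [MeasurableSpace α] [Fintype ι]
    (μ : Measure α) (p : ι → ℝ≥0∞) (T : ι → α → α) : Prop :=
  ∀ f : α → ℝ≥0∞, Measurable f → ∫⁻ x, f x ∂μ = ∑ i, p i * ∫⁻ x, f (T i x) ∂μ

namespace IsIFSInvariant

variable {α β ι κ : Type*} [MeasurableSpace α] [MeasurableSpace β] [Fintype ι] [Fintype κ]
  {μ : Measure α} {p : ι → ℝ≥0∞} {T : ι → α → α}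

theorem measure_eq (hμ : IsIFSInvariant μ p T) (hT : ∀ i, Measurable (T i))
    {s : Set α} (hs : MeasurableSet s) : μ s = ∑ i, p i * μ (T i ⁻¹' s) := by
  simpa [← lintegral_indicator_one hs, ← lintegral_indicator_one (hT _ hs),
    ← indicator_comp_right] using hμ (s.indicator 1) (measurable_one.indicator hs)

theorem prod {ν : Measure β} [SFinite ν] {q : κ → ℝ≥0∞} {S : κ → β → β}
    (hμ : IsIFSInvariant μ p T) (hν : IsIFSInvariant ν q S)
    (hT : ∀ i, Measurable (T i)) (hS : ∀ k, Measurable (S k)) :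
    IsIFSInvariant (μ.prod ν) (fun ik : ι × κ => p ik.1 * q ik.2)
      (fun ik => Prod.map (T ik.1) (S ik.2)) := by
  intro F hF
  have hF_map : ∀ i k, Measurable fun z : α × β => F (T i z.1, S k z.2) := fun i k =>
    hF.comp ((hT i).prodMap (hS k))
  calc ∫⁻ z, F z ∂μ.prod ν
      = ∫⁻ x, ∫⁻ y, F (x, y) ∂ν ∂μ := lintegral_prod _ hF.aemeasurable
    _ = ∑ i, p i * ∫⁻ x, ∫⁻ y, F (T i x, y) ∂ν ∂μ := hμ _ hF.lintegral_prod_right'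
    _ = ∑ i, p i * ∫⁻ x, ∑ k, q k * ∫⁻ y, F (T i x, S k y) ∂ν ∂μ := by
        congr! 3 with i
        exact funext fun x => hν _ (hF.comp measurable_prodMk_left)
    _ = ∑ i, ∑ k, p i * q k * ∫⁻ z, F (T i z.1, S k z.2) ∂μ.prod ν := by
        refine Finset.sum_congr rfl fun i _ => ?_
        rw [lintegral_finsetSum _ fun k _ => ((hF_map i k).lintegral_prod_right').const_mul _,
          Finset.mul_sum]
        refine Finset.sum_congr rfl fun k _ => ?_
        rw [lintegral_const_mul _ (hF_map i k).lintegral_prod_right', mul_assoc,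
          lintegral_prod _ (hF_map i k).aemeasurable]
    _ = _ := (Fintype.sum_prod_type' _).symm

theorem eLpNorm_two_smul_comp {𝕜 E : Type*}
    [NormedField 𝕜] [MeasurableSpace 𝕜] [OpensMeasurableSpace 𝕜]
    [NormedAddCommGroup E] [NormedSpace 𝕜 E] [MeasurableSpace E] [OpensMeasurableSpace E]
    {R : α → α} {w : α → 𝕜} {f : α → E}
    (hμ : IsIFSInvariant μ p T) (hT : ∀ i, Measurable (T i)) (hR : Measurable R)
    (hRT : ∀ i, ∀ᵐ z ∂μ, R (T i z) = z) (hw : Measurable w) (hf : Measurable f)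
    (hw_sum : ∀ᵐ z ∂μ, ∑ i, p i * ‖w (T i z)‖ₑ ^ 2 = 1) :
    eLpNorm (fun z => w z • f (R z)) 2 μ = eLpNorm f 2 μ := by
  simp only [eLpNorm_eq_lintegral_rpow_enorm_toReal two_ne_zero ENNReal.ofNat_ne_top,
    ENNReal.toReal_ofNat, ENNReal.rpow_two, enorm_smul, mul_pow]
  congr 1
  calc ∫⁻ z, ‖w z‖ₑ ^ 2 * ‖f (R z)‖ₑ ^ 2 ∂μ
      = ∑ i, p i * ∫⁻ z, ‖w (T i z)‖ₑ ^ 2 * ‖f (R (T i z))‖ₑ ^ 2 ∂μ := hμ _ (by fun_prop)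
    _ = ∑ i, ∫⁻ z, p i * ‖w (T i z)‖ₑ ^ 2 * ‖f z‖ₑ ^ 2 ∂μ := by
        refine Finset.sum_congr rfl fun i _ => ?_
        have := hT i
        rw [← lintegral_const_mul _ (by fun_prop)]
        exact lintegral_congr_ae ((hRT i).mono fun z hz => by simp only [hz, mul_assoc])
    _ = ∫⁻ z, (∑ i, p i * ‖w (T i z)‖ₑ ^ 2) * ‖f z‖ₑ ^ 2 ∂μ := by
        rw [← lintegral_finsetSum _ fun i _ => by have := hT i; fun_prop]
        simp only [Finset.sum_mul]
    _ = ∫⁻ z, ‖f z‖ₑ ^ 2 ∂μ := lintegral_congr_ae (hw_sum.mono fun z hz => by simp [hz])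

end IsIFSInvariant

theorem Matrix.sum_enorm_sq_of_mem_unitaryGroup {𝕜 n : Type*} [RCLike 𝕜] [Fintype n]
    [DecidableEq n] {U : Matrix n n 𝕜} (hU : U ∈ Matrix.unitaryGroup n 𝕜) (i : n) :
    ∑ k, ‖U i k‖ₑ ^ 2 = 1 := by
  have h := congr_fun₂ (Matrix.mem_unitaryGroup_iff.mp hU) i i
  simp only [Matrix.mul_apply, Matrix.star_apply, RCLike.star_def, RCLike.mul_conj,
    Matrix.one_apply_eq] at h
  have h' : ∑ k, ‖U i k‖ ^ 2 = 1 := by exact_mod_cast h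
  rw [← ENNReal.ofReal_one, ← h', ENNReal.ofReal_sum_of_nonneg fun k _ => by positivity]
  simp only [← ofReal_norm, ENNReal.ofReal_pow (norm_nonneg _)]

theorem setLIntegral_Icc_comp_add_div_two {h : ℝ → ℝ≥0∞} (hh : Measurable h) (a : ℝ) :
    ∫⁻ y in Icc 0 1, h ((y + a) / 2) = 2 * ∫⁻ u in Icc (a / 2) ((1 + a) / 2), h u := by
  set g : ℝ → ℝ := fun y => (y + a) / 2
  have hg : Measurable g := by fun_prop
  have hpre : g ⁻¹' Icc (a / 2) ((1 + a) / 2) = Icc 0 1 := by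
    ext y
    simp only [g, mem_preimage, mem_Icc]
    constructor <;> rintro ⟨_, _⟩ <;> constructor <;> linarith
  have hmap : volume.map g = (2 : ℝ≥0∞) • volume := by
    rw [show g = (fun y => 2⁻¹ * y) ∘ (· + a) by ext y; simp [g, div_eq_inv_mul],
      ← Measure.map_map (by fun_prop) (by fun_prop), map_add_right_eq_self,
      Real.map_volume_mul_left (by norm_num)]
    norm_num
  rw [← lintegral_map hh hg, ← hpre, ← Measure.restrict_map hg measurableSet_Icc, hmap,
    Measure.restrict_smul, lintegral_smul_measure, smul_eq_mul]

noncomputable def cantorMaps : Fin 2 → ℝ → ℝ := ![fun x => x / 4, fun x => (x + 2) / 4]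

noncomputable def dyadicMaps : Fin 2 → ℝ → ℝ := ![fun y => y / 2, fun y => (y + 1) / 2]

theorem measurable_cantorMaps (i : Fin 2) : Measurable (cantorMaps i) := by
  fin_cases i <;> simp only [cantorMaps, Fin.zero_eta, Fin.mk_one, Matrix.cons_val] <;> fun_prop

theorem measurable_dyadicMaps (k : Fin 2) : Measurable (dyadicMaps k) := by
  fin_cases k <;> simp only [dyadicMaps, Fin.zero_eta, Fin.mk_one, Matrix.cons_val] <;> fun_prop

theorem isIFSInvariant_volume_Icc_dyadicMaps :
    IsIFSInvariant (volume.restrict (Icc (0 : ℝ) 1)) (fun _ => 2⁻¹) dyadicMaps := by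
  intro h hh
  have h₀ := setLIntegral_Icc_comp_add_div_two hh 0
  have h₁ := setLIntegral_Icc_comp_add_div_two hh 1
  simp only [add_zero, zero_div, add_self_div_two] at h₀ h₁
  simp only [dyadicMaps, Fin.sum_univ_two, Matrix.cons_val_zero, Matrix.cons_val_one, h₀, h₁,
    ← mul_assoc, ENNReal.inv_mul_cancel two_ne_zero ENNReal.ofNat_ne_top, one_mul]
  rw [← Icc_union_Ioc_eq_Icc (by norm_num : (0 : ℝ) ≤ 1 / 2) (by norm_num : (1 / 2 : ℝ) ≤ 1),
    lintegral_union measurableSet_Ioc ((Iic_disjoint_Ioc le_rfl).mono_left Icc_subset_Iic_self),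
    restrict_Ioc_eq_restrict_Icc]

theorem ae_mem_Ico_of_isIFSInvariant_cantorMaps {μ : Measure ℝ}
    (hμ : IsIFSInvariant μ (fun _ => 2⁻¹) cantorMaps)
    (hsupp : μ (Icc (0 : ℝ) 1)ᶜ = 0) : ∀ᵐ x ∂μ, x ∈ Ico (0 : ℝ) 1 := by
  have hone : μ {1} = 0 := by
    rw [hμ.measure_eq measurable_cantorMaps (measurableSet_singleton 1), Finset.sum_eq_zero]
    intro i _
    refine mul_eq_zero_of_right _ (measure_mono_null ?_ hsupp)
    intro x hx hx_mem
    fin_cases i <;>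
      simp only [cantorMaps, Fin.zero_eta, Fin.mk_one, Matrix.cons_val, mem_preimage,
        mem_singleton_iff] at hx <;>
      linarith [hx_mem.2]
  filter_upwards [mem_ae_iff.mpr hsupp, compl_mem_ae_iff.mpr hone] with x hIcc hne
  rw [← Icc_sdiff_right]
  exact ⟨hIcc, hne⟩

theorem isIFSInvariant_prod_Ups {μ : Measure ℝ}
    (hμ : IsIFSInvariant μ (fun _ => 2⁻¹) cantorMaps) :
    IsIFSInvariant (μ.prod (volume.restrict (Icc (0 : ℝ) 1))) (fun _ => 4⁻¹) Ups := by
  intro F hF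
  rw [hμ.prod isIFSInvariant_volume_Icc_dyadicMaps measurable_cantorMaps measurable_dyadicMaps
    F hF, Fintype.sum_prod_type, Fin.sum_univ_four]
  have h4 : (2⁻¹ : ℝ≥0∞) * 2⁻¹ = 4⁻¹ := by
    rw [← ENNReal.mul_inv (.inl two_ne_zero) (.inl ENNReal.ofNat_ne_top)]; norm_num
  simp only [Fin.sum_univ_two, h4]
  rw [add_add_add_comm, ← add_assoc]
  rfl

theorem measurable_Ups (k : Fin 4) : Measurable (Ups k) := by
  fin_cases k <;> simp only [Ups, Fin.zero_eta, Fin.mk_one, Fin.reduceFinMk, Matrix.cons_val] <;>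
    fun_prop

theorem measurable_Rmap : Measurable Rmap :=
  (measurable_fst.const_mul 4).fract.prodMk (measurable_snd.const_mul 2).fract

theorem Rmap_Ups_of_mem {z : ℝ × ℝ} (hz : z ∈ Ico (0 : ℝ) 1 ×ˢ Ico (0 : ℝ) 1) (k : Fin 4) :
    Rmap (Ups k z) = z := by
  obtain ⟨hx, hy⟩ := hz
  have fx := Int.fract_eq_self.2 hx
  have fy := Int.fract_eq_self.2 hy
  fin_cases k <;> ext <;>
    simp [Rmap, Ups, mul_div_cancel₀, fx, fy, Int.fract_add_ofNat]

theorem ae_Rmap_Ups {μ : Measure ℝ} (hμ : IsIFSInvariant μ (fun _ => 2⁻¹) cantorMaps)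
    (hsupp : μ (Icc (0 : ℝ) 1)ᶜ = 0) (k : Fin 4) :
    ∀ᵐ z ∂(μ.prod (volume.restrict (Icc (0 : ℝ) 1))), Rmap (Ups k z) = z := by
  have hx := (ae_mem_Ico_of_isIFSInvariant_cantorMaps hμ hsupp).filter_mono
    (Measure.quasiMeasurePreserving_fst (ν := volume.restrict (Icc (0 : ℝ) 1))).tendsto_ae
  have hIco : ∀ᵐ y ∂volume.restrict (Icc (0 : ℝ) 1), y ∈ Ico (0 : ℝ) 1 := by
    rw [← restrict_Ico_eq_restrict_Icc]
    exact ae_restrict_mem measurableSet_Ico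
  have hy := hIco.filter_mono (Measure.quasiMeasurePreserving_snd (μ := μ)).tendsto_ae
  filter_upwards [hx, hy] with z hz₁ hz₂ using Rmap_Ups_of_mem ⟨hz₁, hz₂⟩ k

theorem Sj_isometry_general
    (μ₄ : Measure ℝ)
    (hμ₄ : ∀ f : ℝ → ℝ≥0∞, Measurable f →
      ∫⁻ x, f x ∂μ₄ =
        (1 / 2) * (∫⁻ x, f (x / 4) ∂μ₄ + ∫⁻ x, f ((x + 2) / 4) ∂μ₄))
    (hsupp : μ₄ (Icc (0 : ℝ) 1)ᶜ = 0)
    (m : Fin 4 → ℝ × ℝ → ℂ) (hm : ∀ j, Measurable (m j))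
    (hM : ∀ᵐ z ∂(μ₄.prod (volume.restrict (Icc (0 : ℝ) 1))),
      (Matrix.of fun j k : Fin 4 => m j (Ups k z)) ∈ Matrix.unitaryGroup (Fin 4) ℂ)
    (j : Fin 4) (f : ℝ × ℝ → ℂ) (hf : Measurable f) :
    eLpNorm (fun z => 2 * m j z * f (Rmap z)) 2
        (μ₄.prod (volume.restrict (Icc (0 : ℝ) 1))) =
      eLpNorm f 2 (μ₄.prod (volume.restrict (Icc (0 : ℝ) 1))) := by
  have hcantor : IsIFSInvariant μ₄ (fun _ => 2⁻¹) cantorMaps :=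
    fun g hg => by rw [hμ₄ g hg, Fin.sum_univ_two, one_div, mul_add]; rfl
  refine (isIFSInvariant_prod_Ups hcantor).eLpNorm_two_smul_comp (w := fun z => 2 * m j z)
    measurable_Ups measurable_Rmap (ae_Rmap_Ups hcantor hsupp) (measurable_const.mul (hm j)) hf ?_
  filter_upwards [hM] with z hz
  have hrow := Matrix.sum_enorm_sq_of_mem_unitaryGroup hz j
  simp only [Matrix.of_apply] at hrow
  have h2 : ‖(2 : ℂ)‖ₑ = 2 := by rw [← ofReal_norm, Complex.norm_ofNat, ENNReal.ofReal_ofNat]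
  simp only [enorm_mul, h2, mul_pow, ← Finset.mul_sum, hrow, ← mul_assoc]
  norm_num [ENNReal.inv_mul_cancel]

/-- if the matrix `M(x,y) = (m_j(Υ_k(x,y)))_{jk}` is unitary a.e. with
respect to `ν = μ₄ × λ`, then each operator `S_j f = 2 m_j ⋅ (f ∘ R)` is an isometry
of `L²(μ₄ × λ)`: it preserves the L²-norm. -/
theorem Sj_isometry
    (μ₄ : Measure ℝ) [IsProbabilityMeasure μ₄]
    (hμ₄ : ∀ f : ℝ → ℝ≥0∞, Measurable f →
      ∫⁻ x, f x ∂μ₄ =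
        (1 / 2) * (∫⁻ x, f (x / 4) ∂μ₄ + ∫⁻ x, f ((x + 2) / 4) ∂μ₄))
    (hsupp : μ₄ (Icc (0 : ℝ) 1)ᶜ = 0)
    (m : Fin 4 → ℝ × ℝ → ℂ) (hm : ∀ j, Measurable (m j))
    (hM : ∀ᵐ z ∂(μ₄.prod (volume.restrict (Icc (0 : ℝ) 1))),
      (Matrix.of fun j k : Fin 4 => m j (Ups k z)) ∈ Matrix.unitaryGroup (Fin 4) ℂ)
    (j : Fin 4) (f : ℝ × ℝ → ℂ) (hf : Measurable f) :
    eLpNorm (fun z => 2 * m j z * f (Rmap z)) 2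
        (μ₄.prod (volume.restrict (Icc (0 : ℝ) 1))) =
      eLpNorm f 2 (μ₄.prod (volume.restrict (Icc (0 : ℝ) 1))) :=
  Sj_isometry_general μ₄ hμ₄ hsupp m hm hM j f hf
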